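/- Let F be an L-Lipschitz cdf on [0,1], n ≥ 2, ε > 0, and suppose an algorithm can compute an ε'-BNE of the symmetric discrete-bid first-price auction whenever the cdf is ε'-strongly increasing. Given any L-Lipschitz cdf F, define F'(x) = δx + (1−δ)F(x) with δ = ε/(3n). Then F' is a valid δ-strongly increasing, L-Lipschitz cdf with |F'(x) − F(x)| ≤ δ for all x, and any δ-BNE of the auction with cdf F' is an ε-BNE of the auction with cdf F. -/
import Mathlib


open Set

/-- The winning probability Δ(x,y) = (1/n)∑_{r=0}^{n-1} G(x)^r G(y)^{n-1-r}. -/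
noncomputable def Delta (n : ℕ) (G : ℝ → ℝ) (x y : ℝ) : ℝ :=
  (1 / (n : ℝ)) * ∑ r ∈ Finset.range n, G x ^ r * G y ^ (n - 1 - r)

/-- The interim utility under cdf G: u_G(bᵢ; v) = (v − bᵢ)·Δ(s_{i−1}, s_i). -/
noncomputable def util (n : ℕ) (G : ℝ → ℝ) (b s : ℕ → ℝ) (i : ℕ) (v : ℝ) : ℝ :=
  (v - b i) * Delta n G (s (i - 1)) (s i)

private lemma abs_pow_sub_pow01 (a c : ℝ) (ha : a ∈ Set.Icc (0:ℝ) 1)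
    (hc : c ∈ Set.Icc (0:ℝ) 1) (k : ℕ) : |a ^ k - c ^ k| ≤ k * |a - c| := by
  induction k with
  | zero => simp
  | succ k ih =>
    have h1 : a ^ (k+1) - c ^ (k+1) = a * (a ^ k - c ^ k) + (a - c) * c ^ k := by ring
    have hck : |c ^ k| ≤ 1 := by
      rw [abs_of_nonneg (pow_nonneg hc.1 k)]; exact pow_le_one₀ hc.1 hc.2
    have haa : |a| ≤ 1 := abs_le.2 ⟨by linarith [ha.1], ha.2⟩
    calc |a ^ (k+1) - c ^ (k+1)| = |a * (a ^ k - c ^ k) + (a - c) * c ^ k| := by rw [h1]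
      _ ≤ |a * (a ^ k - c ^ k)| + |(a - c) * c ^ k| := abs_add_le _ _
      _ ≤ 1 * |a ^ k - c ^ k| + |a - c| * 1 := by
          rw [abs_mul, abs_mul]
          nlinarith [abs_nonneg (a ^ k - c ^ k), abs_nonneg (a - c), abs_nonneg a, abs_nonneg (c ^ k)]
      _ ≤ 1 * (k * |a - c|) + |a - c| * 1 := by
          have := ih; nlinarith [abs_nonneg (a - c)]
      _ = (↑(k+1)) * |a - c| := by push_cast; ring

private lemma term_diff (a b c d δ : ℝ) (ha : a ∈ Set.Icc (0:ℝ) 1) (hb : b ∈ Set.Icc (0:ℝ) 1)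
    (hc : c ∈ Set.Icc (0:ℝ) 1) (hd : d ∈ Set.Icc (0:ℝ) 1)
    (hac : |a - c| ≤ δ) (hbd : |b - d| ≤ δ) (r k : ℕ) :
    |a ^ r * b ^ k - c ^ r * d ^ k| ≤ (r + k : ℝ) * δ := by
  have h1 : a ^ r * b ^ k - c ^ r * d ^ k
      = (a ^ r - c ^ r) * b ^ k + c ^ r * (b ^ k - d ^ k) := by ring
  have hbk : |b ^ k| ≤ 1 := by
    rw [abs_of_nonneg (pow_nonneg hb.1 k)]; exact pow_le_one₀ hb.1 hb.2
  have hcr : |c ^ r| ≤ 1 := by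
    rw [abs_of_nonneg (pow_nonneg hc.1 r)]; exact pow_le_one₀ hc.1 hc.2
  have e1 := abs_pow_sub_pow01 a c ha hc r
  have e2 := abs_pow_sub_pow01 b d hb hd k
  have hδ0 : (0:ℝ) ≤ δ := le_trans (abs_nonneg _) hac
  calc |a ^ r * b ^ k - c ^ r * d ^ k|
      ≤ |(a ^ r - c ^ r) * b ^ k| + |c ^ r * (b ^ k - d ^ k)| := by rw [h1]; exact abs_add_le _ _
    _ ≤ |a ^ r - c ^ r| * 1 + 1 * |b ^ k - d ^ k| := by
        rw [abs_mul, abs_mul]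
        nlinarith [abs_nonneg (a ^ r - c ^ r), abs_nonneg (b ^ k - d ^ k), abs_nonneg (c ^ r), abs_nonneg (b ^ k)]
    _ ≤ (r * |a - c|) * 1 + 1 * (k * |b - d|) := by nlinarith [abs_nonneg (a-c), abs_nonneg (b^k - d^k)]
    _ ≤ (r * δ) * 1 + 1 * (k * δ) := by
        have : (0:ℝ) ≤ (r:ℝ) := Nat.cast_nonneg r
        have : (0:ℝ) ≤ (k:ℝ) := Nat.cast_nonneg k
        nlinarith [Nat.cast_nonneg (α := ℝ) r, Nat.cast_nonneg (α := ℝ) k]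
    _ = (r + k : ℝ) * δ := by ring

private lemma delta_diff (n : ℕ) (hn : 1 ≤ n) (G H : ℝ → ℝ) (x y δ : ℝ)
    (hGx : G x ∈ Set.Icc (0:ℝ) 1) (hGy : G y ∈ Set.Icc (0:ℝ) 1)
    (hHx : H x ∈ Set.Icc (0:ℝ) 1) (hHy : H y ∈ Set.Icc (0:ℝ) 1)
    (hx : |G x - H x| ≤ δ) (hy : |G y - H y| ≤ δ) :
    |Delta n G x y - Delta n H x y| ≤ n * δ := by
  have hδ0 : (0:ℝ) ≤ δ := le_trans (abs_nonneg _) hx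
  have hn0 : (0:ℝ) < n := by exact_mod_cast hn
  have key : ∀ r ∈ Finset.range n,
      |G x ^ r * G y ^ (n - 1 - r) - H x ^ r * H y ^ (n - 1 - r)| ≤ (n:ℝ) * δ := by
    intro r hr
    have hrn : r + (n - 1 - r) ≤ n := by
      have := Finset.mem_range.1 hr; omega
    calc |G x ^ r * G y ^ (n - 1 - r) - H x ^ r * H y ^ (n - 1 - r)|
        ≤ ((r + (n - 1 - r) : ℕ) : ℝ) * δ := by
          have := term_diff (G x) (G y) (H x) (H y) δ hGx hGy hHx hHy hx hy r (n - 1 - r)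
          simpa using this
      _ ≤ (n:ℝ) * δ := by
          have : ((r + (n - 1 - r) : ℕ) : ℝ) ≤ (n:ℝ) := by exact_mod_cast hrn
          nlinarith
  have hsum : |∑ r ∈ Finset.range n, (G x ^ r * G y ^ (n - 1 - r) - H x ^ r * H y ^ (n - 1 - r))|
      ≤ (n:ℝ) * ((n:ℝ) * δ) := by
    calc |∑ r ∈ Finset.range n, (G x ^ r * G y ^ (n - 1 - r) - H x ^ r * H y ^ (n - 1 - r))|
        ≤ ∑ r ∈ Finset.range n, |G x ^ r * G y ^ (n - 1 - r) - H x ^ r * H y ^ (n - 1 - r)| :=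
          Finset.abs_sum_le_sum_abs _ _
      _ ≤ ∑ r ∈ Finset.range n, (n:ℝ) * δ := Finset.sum_le_sum key
      _ = (n:ℝ) * ((n:ℝ) * δ) := by rw [Finset.sum_const, Finset.card_range]; ring
  have heq : Delta n G x y - Delta n H x y
      = (1 / (n:ℝ)) * ∑ r ∈ Finset.range n,
        (G x ^ r * G y ^ (n - 1 - r) - H x ^ r * H y ^ (n - 1 - r)) := by
    unfold Delta; rw [Finset.sum_sub_distrib]; ring
  rw [heq, abs_mul, abs_of_nonneg (by positivity : (0:ℝ) ≤ 1 / (n:ℝ))]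
  rw [div_mul_eq_mul_div, one_mul, div_le_iff₀ hn0]
  calc |∑ r ∈ Finset.range n, (G x ^ r * G y ^ (n - 1 - r) - H x ^ r * H y ^ (n - 1 - r))|
      ≤ (n:ℝ) * ((n:ℝ) * δ) := hsum
    _ = (n:ℝ) * δ * (n:ℝ) := by ring

/-- Reduction to strongly increasing cdfs. Given an L-Lipschitz cdf F on
[0,1] and δ = ε/(3n), the cdf F'(x) = δx + (1−δ)F(x) is a valid L-Lipschitz,
δ-strongly increasing cdf with |F'(x) − F(x)| ≤ δ on [0,1], and any δ-BNE of the
discrete-bid auction with cdf F' is an ε-BNE of the auction with cdf F. -/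
theorem reduction_to_strongly_increasing (n m : ℕ) (hn : 2 ≤ n) (hm : 1 ≤ m)
    (L ε δ : ℝ) (hε : 0 < ε) (hε1 : ε ≤ 1) (hδ : δ = ε / (3 * n))
    (F F' : ℝ → ℝ)
    (hF0 : F 0 = 0) (hF1 : F 1 = 1) (hFmono : MonotoneOn F (Set.Icc 0 1))
    (hFLip : ∀ x ∈ Set.Icc (0:ℝ) 1, ∀ y ∈ Set.Icc (0:ℝ) 1, |F x - F y| ≤ L * |x - y|)
    (hFrange : ∀ x ∈ Set.Icc (0:ℝ) 1, F x ∈ Set.Icc (0:ℝ) 1)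
    (hF' : ∀ x, F' x = δ * x + (1 - δ) * F x)
    (b s : ℕ → ℝ)
    (hbr : ∀ i, 1 ≤ i → i ≤ m → b i ∈ Set.Icc (0:ℝ) 1)
    (hsr : ∀ i, i ≤ m → s i ∈ Set.Icc (0:ℝ) 1) :
    F' 0 = 0 ∧ F' 1 = 1 ∧ MonotoneOn F' (Set.Icc 0 1) ∧
    (∀ x ∈ Set.Icc (0:ℝ) 1, ∀ y ∈ Set.Icc (0:ℝ) 1, |F' x - F' y| ≤ L * |x - y|) ∧
    (∀ x ∈ Set.Icc (0:ℝ) 1, ∀ y ∈ Set.Icc (0:ℝ) 1, y ≤ x → F' y + δ * (x - y) ≤ F' x) ∧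
    (∀ x ∈ Set.Icc (0:ℝ) 1, |F' x - F x| ≤ δ) ∧
    ((∀ v ∈ Set.Icc (0:ℝ) 1, ∀ ℓ, 1 ≤ ℓ → ℓ ≤ m → v ∈ Set.Ioc (s (ℓ - 1)) (s ℓ) →
        ∀ j, 1 ≤ j → j ≤ m → util n F' b s j v ≤ util n F' b s ℓ v + δ) →
      (∀ v ∈ Set.Icc (0:ℝ) 1, ∀ ℓ, 1 ≤ ℓ → ℓ ≤ m → v ∈ Set.Ioc (s (ℓ - 1)) (s ℓ) →
        ∀ j, 1 ≤ j → j ≤ m → util n F b s j v ≤ util n F b s ℓ v + ε)) := by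
  have hn0 : (0:ℝ) < n := by exact_mod_cast (by omega : 0 < n)
  have hn2 : (2:ℝ) ≤ n := by exact_mod_cast hn
  have hδ0 : 0 < δ := by rw [hδ]; positivity
  have hδ6 : δ ≤ 1/6 := by
    rw [hδ, div_le_div_iff₀ (by positivity) (by norm_num)]; nlinarith
  have hδ1 : δ ≤ 1 := by linarith
  -- L ≥ 1
  have hL1 : (1:ℝ) ≤ L := by
    have := hFLip 1 (by norm_num) 0 (by norm_num)
    rw [hF1, hF0] at this; simpa using this
  have hF'0 : F' 0 = 0 := by rw [hF', hF0]; ring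
  have hF'1 : F' 1 = 1 := by rw [hF', hF1]; ring
  have hF'range : ∀ x ∈ Set.Icc (0:ℝ) 1, F' x ∈ Set.Icc (0:ℝ) 1 := by
    intro x hx
    have hFx := hFrange x hx
    rw [hF']
    constructor
    · nlinarith [hx.1, hFx.1]
    · nlinarith [hx.2, hFx.2]
  have hF'mono : MonotoneOn F' (Set.Icc 0 1) := by
    intro x hx y hy hxy
    have := hFmono hx hy hxy
    rw [hF', hF']
    nlinarith
  refine ⟨hF'0, hF'1, hF'mono, ?_, ?_, ?_, ?_⟩
  · -- Lipschitz
    intro x hx y hy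
    have hFxy := hFLip x hx y hy
    rw [hF', hF']
    have h1 : δ * x + (1 - δ) * F x - (δ * y + (1 - δ) * F y)
        = δ * (x - y) + (1 - δ) * (F x - F y) := by ring
    rw [h1]
    calc |δ * (x - y) + (1 - δ) * (F x - F y)|
        ≤ |δ * (x - y)| + |(1 - δ) * (F x - F y)| := abs_add_le _ _
      _ ≤ L * |x - y| := by
          rw [abs_mul, abs_mul, abs_of_pos hδ0,
            abs_of_nonneg (show (0:ℝ) ≤ 1 - δ by linarith)]
          nlinarith [hFxy, abs_nonneg (x - y), abs_nonneg (F x - F y),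
            mul_nonneg (mul_nonneg hδ0.le (sub_nonneg.2 hL1)) (abs_nonneg (x - y))]
  · -- strongly increasing
    intro x hx y hy hyx
    have := hFmono hy hx hyx
    rw [hF', hF']
    nlinarith
  · -- |F' - F| ≤ δ
    intro x hx
    have hFx := hFrange x hx
    rw [hF']
    have h1 : δ * x + (1 - δ) * F x - F x = δ * (x - F x) := by ring
    rw [h1, abs_mul, abs_of_nonneg hδ0.le]
    have : |x - F x| ≤ 1 := by
      rw [abs_le]; constructor <;> [linarith [hx.1, hFx.2]; linarith [hx.2, hFx.1]]
    nlinarith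
  · -- BNE transfer
    intro hBNE v hv ℓ hℓ1 hℓm hvs j hj1 hjm
    have hdiffF'F : ∀ x ∈ Set.Icc (0:ℝ) 1, |F' x - F x| ≤ δ := by
      intro x hx
      have hFx := hFrange x hx
      rw [hF']
      have h1 : δ * x + (1 - δ) * F x - F x = δ * (x - F x) := by ring
      rw [h1, abs_mul, abs_of_nonneg hδ0.le]
      have : |x - F x| ≤ 1 := by
        rw [abs_le]; constructor <;> [linarith [hx.1, hFx.2]; linarith [hx.2, hFx.1]]
      nlinarith
    -- util diff bound for any index i between 1 and m
    have hutil : ∀ i, 1 ≤ i → i ≤ m → |util n F b s i v - util n F' b s i v| ≤ (n:ℝ) * δ := by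
      intro i hi1 him
      have hsi : s i ∈ Set.Icc (0:ℝ) 1 := hsr i him
      have hsi1 : s (i-1) ∈ Set.Icc (0:ℝ) 1 := hsr (i-1) (by omega)
      have hdd := delta_diff n (by omega) F F' (s (i-1)) (s i) δ
        (hFrange _ hsi1) (hFrange _ hsi) (hF'range _ hsi1) (hF'range _ hsi)
        (by rw [abs_sub_comm]; exact hdiffF'F _ hsi1)
        (by rw [abs_sub_comm]; exact hdiffF'F _ hsi)
      have hbi := hbr i hi1 him
      have hvb : |v - b i| ≤ 1 := by
        rw [abs_le]; constructor <;> [linarith [hv.1, hbi.2]; linarith [hv.2, hbi.1]]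
      have h1 : util n F b s i v - util n F' b s i v
          = (v - b i) * (Delta n F (s (i-1)) (s i) - Delta n F' (s (i-1)) (s i)) := by
        unfold util; ring
      rw [h1, abs_mul]
      calc |v - b i| * |Delta n F (s (i-1)) (s i) - Delta n F' (s (i-1)) (s i)|
          ≤ 1 * ((n:ℝ) * δ) := by
            apply mul_le_mul hvb hdd (abs_nonneg _) (by norm_num)
        _ = (n:ℝ) * δ := by ring
    have h1 := hBNE v hv ℓ hℓ1 hℓm hvs j hj1 hjm
    have h2 := hutil j hj1 hjm
    have h3 := hutil ℓ hℓ1 hℓm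
    have habs2 := abs_le.1 h2
    have habs3 := abs_le.1 h3
    -- 2nδ + δ ≤ ε
    have hfin : 2 * ((n:ℝ) * δ) + δ ≤ ε := by
      have hnδ : (n:ℝ) * δ = ε / 3 := by rw [hδ]; field_simp
      have hδε : δ ≤ ε / 3 := by
        rw [hδ, div_le_div_iff₀ (by positivity) (by norm_num)]
        nlinarith
      linarith
    linarith [habs2.1, habs2.2, habs3.1, habs3.2]
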